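/- Let m ≥ 1 be fixed and n ≥ m. Let H be the random n×m Toeplitz matrix built from i.i.d. Rademacher inputs h_{-m+2},…,h_n. Fix z ∈ ℝ^m with ‖z‖₂ = 1 and set S = n·E|Σ_{i=1}^m z_i ε_i|, where ε₁,…,ε_m are i.i.d. Rademacher. Then for any ε > 0, with probability at least 1 − 2e^{−ε² n² / (2(n+m−1)m)}, one has S − εn ≤ ‖Hz‖₁ ≤ S + εn. -/

import Mathlib

/-!
Replacing one input `h_k` by `x` changes `‖Hz‖₁` by at most `‖z‖₁ |x - h_k| ≤ √m |x - h_k|`,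
since every input occurs at most once in each column of `H` (Young's inequality
`‖Hz‖₁ ≤ ‖z‖₁ ‖h‖₁`). For sign inputs this is a bounded-differences condition with constants
`2√m`, so McDiarmid's inequality over the `n + m - 1` inputs gives tails
`exp (-t² / (2 (n + m - 1) m))` on both sides of the mean. McDiarmid's inequality is proved on the
discrete cube by induction on the dimension, bounding the moment generating function one coordinate
at a time with `exp u + exp v ≤ 2 exp ((u + v) / 2 + (u - v)² / 8)`, followed by the sub-Gaussian
Chernoff bound. Every row of `H` consists of `m` distinct inputs, so it is distributed as
`(ε₁, …, ε_m)` and the mean of `‖Hz‖₁` is `S`.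
-/

open MeasureTheory ProbabilityTheory Finset Filter

noncomputable section

/-- The `n × m` Toeplitz matrix built from the input sequence
`h = (h_{-m+2}, …, h_n)`, reindexed as `h : Fin (n+m-1) → ℝ`;
the `(i,j)` entry (0-based) is the input with index `i + j`, which corresponds to
`H_{i,j} = h_{i-m+j}` in 1-based indexing. -/
def toeplitz (n m : ℕ) (h : Fin (n + m - 1) → ℝ) : Matrix (Fin n) (Fin m) ℝ :=
  fun i j => h ⟨i.1 + j.1, by have := i.2; have := j.2; omega⟩

/-- The ℓ¹ norm of a vector in `ℝ^k`. -/
def l1 {k : ℕ} (v : Fin k → ℝ) : ℝ := ∑ i, |v i|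

/-- The Euclidean (ℓ²) norm of a vector in `ℝ^k`. -/
def l2 {k : ℕ} (v : Fin k → ℝ) : ℝ := Real.sqrt (∑ i, (v i) ^ 2)

/-- The Rademacher measure on ℝ: values `+1` and `-1` with probability `1/2` each. -/
def radMeasure : Measure ℝ :=
  (2 : ENNReal)⁻¹ • Measure.dirac 1 + (2 : ENNReal)⁻¹ • Measure.dirac (-1)

/-- Product of `d` i.i.d. Rademacher measures on `ℝ^d`. -/
def radPi (d : ℕ) : Measure (Fin d → ℝ) := Measure.pi fun _ => radMeasure

open Classical in
/-- Number of nonzero entries of a vector. -/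
def sparsity {k : ℕ} (v : Fin k → ℝ) : ℕ := (Finset.univ.filter fun i => v i ≠ 0).card


open Real Function Matrix

instance : IsProbabilityMeasure radMeasure :=
  ⟨by simp [radMeasure, ENNReal.inv_two_add_inv_two]⟩

instance (d : ℕ) : IsProbabilityMeasure (radPi d) := by
  unfold radPi; infer_instance

def signVec {d : ℕ} (s : Fin d → Bool) : Fin d → ℝ := fun i => if s i then 1 else -1

lemma signVec_update {d : ℕ} (s : Fin d → Bool) (i : Fin d) (b : Bool) :
    signVec (update s i b) = update (signVec s) i (if b then 1 else -1) := by
  ext j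
  by_cases hj : j = i
  · subst hj; simp [signVec]
  · simp [signVec, hj]

lemma abs_sub_signVec_le_two {d : ℕ} (s : Fin d → Bool) (i : Fin d) (b : Bool) :
    |(if b then 1 else -1) - signVec s i| ≤ 2 := by
  unfold signVec; split_ifs <;> norm_num

lemma radMeasure_apply (A : Set ℝ) :
    radMeasure A = 2⁻¹ * ∑ b : Bool, A.indicator 1 (if b then (1 : ℝ) else -1) := by
  simp [radMeasure, Measure.dirac_apply, mul_add]

lemma radPi_eq_sum_dirac (d : ℕ) :
    radPi d = ((2 : ENNReal) ^ d)⁻¹ • ∑ s : Fin d → Bool, Measure.dirac (signVec s) := by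
  refine Measure.pi_eq fun A _ => ?_
  simp only [radMeasure_apply, Measure.smul_apply, Measure.finsetSum_apply, Measure.dirac_apply,
    prod_mul_distrib, prod_const, card_univ, Fintype.card_fin, Fintype.prod_sum, ENNReal.inv_pow,
    smul_eq_mul]
  simp_rw [← Finset.coe_univ, Set.indicator_pi_one_apply]
  rfl

lemma integrable_radPi {d : ℕ} (G : (Fin d → ℝ) → ℝ) : Integrable G (radPi d) := by
  rw [radPi_eq_sum_dirac]
  exact (integrable_finsetSum_measure.2 fun s _ => integrable_dirac enorm_lt_top).smul_measure
    (by simp)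

lemma integral_radPi {d : ℕ} (G : (Fin d → ℝ) → ℝ) :
    ∫ h, G h ∂radPi d = ((2 : ℝ) ^ d)⁻¹ * ∑ s : Fin d → Bool, G (signVec s) := by
  rw [radPi_eq_sum_dirac, integral_smul_measure,
    integral_finsetSum_measure fun s _ => integrable_dirac enorm_lt_top]
  simp [integral_dirac]

lemma measurePreserving_comp_of_injective {ι κ α : Type*} [Fintype ι] [Fintype κ]
    [MeasurableSpace α] (μ : Measure α) [IsProbabilityMeasure μ] {e : κ → ι}
    (he : Injective e) :
    MeasurePreserving (fun h : ι → α => h ∘ e) (Measure.pi fun _ => μ)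
      (Measure.pi fun _ => μ) := by
  classical
  have hsplit : MeasurePreserving
      (MeasurableEquiv.piEquivPiSubtypeProd (fun _ => α) (· ∈ Set.range e))
      (Measure.pi fun _ => μ)
      ((Measure.pi fun _ : Set.range e => μ).prod
        (Measure.pi fun _ : {i // i ∉ Set.range e} => μ)) := by
    convert measurePreserving_piEquivPiSubtypeProd (fun _ : ι => μ) (· ∈ Set.range e)
  have hrange := measurePreserving_piCongrLeft (fun _ : Set.range e => μ) (Equiv.ofInjective e he)
  convert (hrange.symm _).comp (measurePreserving_fst.comp hsplit)
  ext h
  simp [MeasurableEquiv.piCongrLeft, Equiv.piCongrLeft_symm_apply]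

lemma integral_radPi_comp_of_injective {d m : ℕ} {e : Fin m → Fin d} (he : Injective e)
    (G : (Fin m → ℝ) → ℝ) : ∫ h, G (h ∘ e) ∂radPi d = ∫ a, G a ∂radPi m := by
  have hmp := measurePreserving_comp_of_injective radMeasure he
  rw [← radPi, ← radPi] at hmp
  rw [← hmp.map_eq, integral_map hmp.measurable.aemeasurable
    (hmp.map_eq ▸ (integrable_radPi G).aestronglyMeasurable)]

lemma exp_add_exp_le (u v : ℝ) : exp u + exp v ≤ 2 * exp ((u + v) / 2 + (u - v) ^ 2 / 8) := by
  have hcosh := cosh_le_exp_half_sq ((u - v) / 2)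
  calc exp u + exp v = 2 * exp ((u + v) / 2) * cosh ((u - v) / 2) := by
        rw [cosh_eq, mul_div_assoc', mul_add, mul_assoc, mul_assoc, ← exp_add, ← exp_add]
        ring_nf
    _ ≤ 2 * exp ((u + v) / 2) * exp (((u - v) / 2) ^ 2 / 2) := by gcongr
    _ = 2 * exp ((u + v) / 2 + (u - v) ^ 2 / 8) := by rw [mul_assoc, ← exp_add]; ring_nf

lemma sum_pi_fin_succ_bool {d : ℕ} {M : Type*} [AddCommMonoid M] (φ : (Fin (d + 1) → Bool) → M) :
    ∑ s, φ s = ∑ s : Fin d → Bool, (φ (Fin.cons true s) + φ (Fin.cons false s)) := by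
  rw [← (Fin.consEquiv fun _ => Bool).sum_comp, Fintype.sum_prod_type, Fintype.sum_bool,
    ← sum_add_distrib]
  rfl

theorem avg_exp_le_exp_avg_add {d : ℕ} {F : (Fin d → Bool) → ℝ} {c : ℝ}
    (hF : ∀ s i b, |F (update s i b) - F s| ≤ c) :
    ((2 : ℝ) ^ d)⁻¹ * ∑ s, exp (F s) ≤ exp (((2 : ℝ) ^ d)⁻¹ * ∑ s, F s + d * c ^ 2 / 8) := by
  induction d with
  | zero => simp
  | succ d ih =>
    -- Averaging over the first coordinate costs a factor `exp (c² / 8)` by `exp_add_exp_le`,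
    -- and the average `g` of the two halves again has differences bounded by `c`.
    set g : (Fin d → Bool) → ℝ := fun s => (F (Fin.cons true s) + F (Fin.cons false s)) / 2
    have hg : ∀ s i b, |g (update s i b) - g s| ≤ c := fun s i b => by
      have ht := hF (Fin.cons true s) i.succ b
      have hf := hF (Fin.cons false s) i.succ b
      rw [← Fin.cons_update] at ht hf
      rw [abs_le] at ht hf ⊢
      constructor <;> simp only [g] <;> linarith
    have hstep : ∀ s, (exp (F (Fin.cons true s)) + exp (F (Fin.cons false s))) / 2 ≤
        exp (g s + c ^ 2 / 8) := fun s => by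
      have h0 := hF (Fin.cons false s) 0 true
      rw [Fin.update_cons_zero] at h0
      have hsq : (F (Fin.cons true s) - F (Fin.cons false s)) ^ 2 ≤ c ^ 2 :=
        sq_le_sq' (abs_le.1 h0).1 (abs_le.1 h0).2
      calc _ ≤ exp ((F (Fin.cons true s) + F (Fin.cons false s)) / 2 +
              (F (Fin.cons true s) - F (Fin.cons false s)) ^ 2 / 8) := by
            linarith [exp_add_exp_le (F (Fin.cons true s)) (F (Fin.cons false s))]
        _ ≤ _ := by gcongr
    calc ((2 : ℝ) ^ (d + 1))⁻¹ * ∑ s, exp (F s)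
        = ((2 : ℝ) ^ d)⁻¹ * ∑ s : Fin d → Bool,
            (exp (F (Fin.cons true s)) + exp (F (Fin.cons false s))) / 2 := by
          rw [sum_pi_fin_succ_bool, ← sum_div, pow_succ]; ring
      _ ≤ ((2 : ℝ) ^ d)⁻¹ * ∑ s : Fin d → Bool, exp (g s + c ^ 2 / 8) := by
          gcongr with s; exact hstep s
      _ = exp (c ^ 2 / 8) * (((2 : ℝ) ^ d)⁻¹ * ∑ s, exp (g s)) := by
          simp only [exp_add, ← sum_mul]; ring
      _ ≤ exp (c ^ 2 / 8) * exp (((2 : ℝ) ^ d)⁻¹ * ∑ s, g s + d * c ^ 2 / 8) := by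
          gcongr; exact ih hg
      _ = exp (((2 : ℝ) ^ (d + 1))⁻¹ * ∑ s, F s + (d + 1 : ℕ) * c ^ 2 / 8) := by
          rw [← exp_add, sum_pi_fin_succ_bool F]
          simp only [g, ← sum_div, pow_succ]
          push_cast; ring_nf

theorem hasSubgaussianMGF_radPi_sub_integral {d : ℕ} {f : (Fin d → ℝ) → ℝ} {L : NNReal}
    (hf : ∀ h k x, |f (update h k x) - f h| ≤ L * |x - h k|) :
    HasSubgaussianMGF (fun h => f h - ∫ h, f h ∂radPi d) (d * L ^ 2) (radPi d) where
  integrable_exp_mul _ := integrable_radPi _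
  mgf_le t := by
    set M := ∫ h, f h ∂radPi d
    have hM : M = ((2 : ℝ) ^ d)⁻¹ * ∑ s, f (signVec s) := integral_radPi f
    have hdiff : ∀ s i b, |t * (f (signVec (update s i b)) - M) - t * (f (signVec s) - M)| ≤
        |t| * (2 * L) := fun s i b => by
      rw [← mul_sub, sub_sub_sub_cancel_right, abs_mul, signVec_update]
      gcongr
      calc _ ≤ L * |(if b then 1 else -1) - signVec s i| := hf _ _ _
        _ ≤ L * 2 := by gcongr; exact abs_sub_signVec_le_two s i b
        _ = _ := mul_comm _ _
    have hcentered : ((2 : ℝ) ^ d)⁻¹ * ∑ s, t * (f (signVec s) - M) = 0 := by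
      rw [← mul_sum, sum_sub_distrib, sum_const, card_univ, Fintype.card_fun, Fintype.card_bool,
        Fintype.card_fin, nsmul_eq_mul, hM]
      push_cast
      field_simp
      ring
    calc mgf (fun h => f h - M) (radPi d) t
        = ((2 : ℝ) ^ d)⁻¹ * ∑ s, exp (t * (f (signVec s) - M)) := integral_radPi _
      _ ≤ exp (0 + d * (|t| * (2 * L)) ^ 2 / 8) :=
          hcentered ▸ avg_exp_le_exp_avg_add hdiff
      _ = exp (↑(d * L ^ 2 : NNReal) * t ^ 2 / 2) := by
          push_cast; rw [mul_pow, mul_pow, sq_abs]; ring_nf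

theorem radPi_mcdiarmid {d : ℕ} {f : (Fin d → ℝ) → ℝ} {L : NNReal}
    (hf : ∀ h k x, |f (update h k x) - f h| ≤ L * |x - h k|) {t : ℝ} (ht : 0 ≤ t) :
    ENNReal.ofReal (1 - 2 * exp (-t ^ 2 / (2 * (d * L ^ 2)))) ≤
      radPi d {h | ∫ h, f h ∂radPi d - t ≤ f h ∧ f h ≤ ∫ h, f h ∂radPi d + t} := by
  set M := ∫ h, f h ∂radPi d
  set E := exp (-t ^ 2 / (2 * (d * L ^ 2)))
  have hX := hasSubgaussianMGF_radPi_sub_integral hf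
  have htail : ∀ X : (Fin d → ℝ) → ℝ, HasSubgaussianMGF X (d * L ^ 2) (radPi d) →
      radPi d {h | t ≤ X h} ≤ ENNReal.ofReal E := fun X hX => by
    rw [ENNReal.le_ofReal_iff_toReal_le (measure_ne_top _ _) (exp_pos _).le]
    simpa [measureReal_def] using hX.measure_ge_le ht
  set A := {h | M - t ≤ f h ∧ f h ≤ M + t}
  have hcompl : Aᶜ ⊆ {h | t ≤ f h - M} ∪ {h | t ≤ -(f h - M)} := fun h hh => by
    simp only [A, Set.mem_compl_iff, Set.mem_ofPred_eq, not_and_or, not_le] at hh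
    rcases hh with hh | hh
    · right; simp only [Set.mem_ofPred_eq]; linarith
    · left; simp only [Set.mem_ofPred_eq]; linarith
  have hcover : 1 ≤ radPi d A + ENNReal.ofReal (2 * E) := by
    calc (1 : ENNReal) = radPi d Set.univ := measure_univ.symm
      _ ≤ radPi d A + radPi d Aᶜ := measure_univ_le_add_compl _
      _ ≤ radPi d A + (ENNReal.ofReal E + ENNReal.ofReal E) := by
          gcongr
          exact (measure_mono hcompl).trans
            ((measure_union_le _ _).trans (add_le_add (htail _ hX) (htail _ hX.neg)))
      _ = _ := by rw [← ENNReal.ofReal_add (exp_pos _).le (exp_pos _).le, ← two_mul]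
  rw [ENNReal.ofReal_sub _ (by positivity), ENNReal.ofReal_one]
  exact tsub_le_iff_right.2 hcover

lemma abs_l1_sub_l1_le {k : ℕ} (u v : Fin k → ℝ) : |l1 u - l1 v| ≤ l1 (u - v) := by
  unfold l1
  rw [← sum_sub_distrib]
  exact (abs_sum_le_sum_abs _ _).trans
    (sum_le_sum fun i _ => abs_abs_sub_abs_le_abs_sub (u i) (v i))

lemma l1_le_sqrt_card_mul_l2 {k : ℕ} (v : Fin k → ℝ) : l1 v ≤ √k * l2 v := by
  rw [l2, ← sqrt_mul (Nat.cast_nonneg k), l1]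
  refine le_sqrt_of_sq_le ?_
  simpa using sq_sum_le_card_mul_sum_sq (s := univ) (f := fun i => |v i|)

lemma l1_update_sub {k : ℕ} (v : Fin k → ℝ) (i : Fin k) (x : ℝ) :
    l1 (update v i x - v) = |x - v i| := by
  rw [l1, sum_eq_single i fun j _ hj => by simp [hj]] <;> simp

lemma sum_comp_le_sum_of_injective {ι κ : Type*} [Fintype ι] [Fintype κ] {e : κ → ι}
    (he : Injective e) {g : ι → ℝ} (hg : ∀ i, 0 ≤ g i) : ∑ k, g (e k) ≤ ∑ i, g i :=
  (sum_map univ ⟨e, he⟩ g).symm.trans_le (sum_le_univ_sum_of_nonneg hg)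

section Toeplitz

variable {n m : ℕ}

lemma toeplitz_apply_eq_comp (h : Fin (n + m - 1) → ℝ) (i : Fin n) :
    toeplitz n m h i = h ∘ Fin.castLE (by omega) ∘ Fin.natAdd i :=
  rfl

lemma toeplitz_sub (g h : Fin (n + m - 1) → ℝ) :
    toeplitz n m (g - h) = toeplitz n m g - toeplitz n m h :=
  rfl

lemma l1_toeplitz_mulVec (h : Fin (n + m - 1) → ℝ) (z : Fin m → ℝ) :
    l1 (toeplitz n m h *ᵥ z) = ∑ i, |∑ j, z j * toeplitz n m h i j| := by
  simp [l1, mulVec, dotProduct, mul_comm]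

lemma l1_toeplitz_mulVec_le (h : Fin (n + m - 1) → ℝ) (z : Fin m → ℝ) :
    l1 (toeplitz n m h *ᵥ z) ≤ l1 z * l1 h := by
  rw [l1_toeplitz_mulVec]
  calc ∑ i, |∑ j, z j * toeplitz n m h i j| ≤ ∑ i, ∑ j, |z j| * |toeplitz n m h i j| :=
        sum_le_sum fun i _ => (abs_sum_le_sum_abs _ _).trans_eq (by simp [abs_mul])
    _ = ∑ j, |z j| * ∑ i, |toeplitz n m h i j| := by rw [sum_comm]; simp [mul_sum]
    _ ≤ ∑ j, |z j| * l1 h := by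
        gcongr with j
        -- column `j` of `H` meets each input at most once
        have hcol : Injective
            (Fin.castLE (by omega) ∘ (Fin.addNat · j) : Fin n → Fin (n + m - 1)) :=
          (Fin.castLE_injective _).comp fun _ _ => (Fin.addNat_inj j).1
        exact sum_comp_le_sum_of_injective hcol fun k => abs_nonneg (h k)
    _ = l1 z * l1 h := by rw [← sum_mul, l1]; rfl

lemma abs_l1_toeplitz_mulVec_update_sub_le (h : Fin (n + m - 1) → ℝ) (z : Fin m → ℝ)
    (k : Fin (n + m - 1)) (x : ℝ) :
    |l1 (toeplitz n m (update h k x) *ᵥ z) - l1 (toeplitz n m h *ᵥ z)| ≤ l1 z * |x - h k| := by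
  calc _ ≤ l1 (toeplitz n m (update h k x - h) *ᵥ z) := by
        rw [toeplitz_sub, sub_mulVec]; exact abs_l1_sub_l1_le _ _
    _ ≤ l1 z * |x - h k| := by rw [← l1_update_sub]; exact l1_toeplitz_mulVec_le _ _

lemma integral_radPi_l1_toeplitz_mulVec (z : Fin m → ℝ) :
    ∫ h, l1 (toeplitz n m h *ᵥ z) ∂radPi (n + m - 1) = n * ∫ a, |∑ j, z j * a j| ∂radPi m := by
  simp_rw [l1_toeplitz_mulVec, toeplitz_apply_eq_comp]
  rw [integral_finsetSum _ fun i _ => integrable_radPi _]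
  simp_rw [integral_radPi_comp_of_injective
    ((Fin.castLE_injective _).comp (Fin.natAdd_injective _ _)) fun a => |∑ j, z j * a j|]
  simp

end Toeplitz

theorem stmt8_general (m n : ℕ) (hm : 1 ≤ m)
    (z : Fin m → ℝ) (hz : l2 z = 1) (ε : ℝ) (hε : 0 < ε) :
    ENNReal.ofReal
        (1 - 2 * Real.exp (-(ε ^ 2 * (n : ℝ) ^ 2) / (2 * ((n : ℝ) + m - 1) * m))) ≤
      radPi (n + m - 1)
        {h | (n : ℝ) * (∫ a, |∑ i, z i * a i| ∂ radPi m) - ε * n ≤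
              l1 ((toeplitz n m h).mulVec z) ∧
            l1 ((toeplitz n m h).mulVec z) ≤
              (n : ℝ) * (∫ a, |∑ i, z i * a i| ∂ radPi m) + ε * n} := by
  have hlip : ∀ h k x, |l1 (toeplitz n m (update h k x) *ᵥ z) - l1 (toeplitz n m h *ᵥ z)| ≤
      NNReal.sqrt m * |x - h k| := fun h k x => by
    refine (abs_l1_toeplitz_mulVec_update_sub_le h z k x).trans ?_
    gcongr
    simpa [hz] using l1_le_sqrt_card_mul_l2 z
  have hconc := radPi_mcdiarmid (f := fun h => l1 (toeplitz n m h *ᵥ z)) hlip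
    (t := ε * n) (mul_nonneg hε.le n.cast_nonneg)
  rw [integral_radPi_l1_toeplitz_mulVec] at hconc
  convert hconc using 5
  push_cast [Nat.cast_sub (by omega : 1 ≤ n + m)]
  rw [sq_sqrt m.cast_nonneg]
  ring

/-- McDiarmid-type concentration of `‖Hz‖₁` for the Rademacher
Toeplitz matrix and a fixed unit vector `z`, around `S = n·E|∑ zᵢεᵢ|`:
`S - εn ≤ ‖Hz‖₁ ≤ S + εn` with probability at least
`1 - 2e^{-ε²n²/(2(n+m-1)m)}`. -/
theorem stmt8 (m n : ℕ) (hm : 1 ≤ m) (hmn : m ≤ n)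
    (z : Fin m → ℝ) (hz : l2 z = 1) (ε : ℝ) (hε : 0 < ε) :
    ENNReal.ofReal
        (1 - 2 * Real.exp (-(ε ^ 2 * (n : ℝ) ^ 2) / (2 * ((n : ℝ) + m - 1) * m))) ≤
      radPi (n + m - 1)
        {h | (n : ℝ) * (∫ a, |∑ i, z i * a i| ∂ radPi m) - ε * n ≤
              l1 ((toeplitz n m h).mulVec z) ∧
            l1 ((toeplitz n m h).mulVec z) ≤
              (n : ℝ) * (∫ a, |∑ i, z i * a i| ∂ radPi m) + ε * n} :=
  stmt8_general m n hm z hz ε hε
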